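/- arXiv:2210.01105 — 7 statements merged into one kernel-verified Lean document; each statement's English description precedes it below -/
import Mathlib

section
/- Let $k \ge 2$ and let $F$ be a $3$-uniform hypergraph on $n$ vertices such that no $k$ edges of $F$ span at most $k+2$ vertices (i.e., $F$ is $(k+2,k)$-free). Then $F$ has at most $\frac{k}{6} n^2$ edges. -/
/-!
Every pair of vertices lies in fewer than `k` edges: `k` edges through a common pair span at
most `k + 2` vertices. Counting (pair, edge) incidences then gives
`3 |F| ≤ (k - 1) (n choose 2) ≤ k n² / 2`.
-/

open Finset

namespace Finset

variable {α : Type*} [DecidableEq α]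

theorem card_sup_id_le_of_forall_superset {S : Finset (Finset α)} {p : Finset α}
    (hp : ∀ e ∈ S, p ⊆ e) (hS : ∀ e ∈ S, #e ≤ #p + 1) : #(S.sup id) ≤ #p + #S := by
  have hsub : S.sup id ⊆ p ∪ S.biUnion (· \ p) := by
    intro x hx
    obtain ⟨e, he, hxe⟩ := mem_sup.mp hx
    by_cases hxp : x ∈ p
    · exact mem_union_left _ hxp
    · exact mem_union_right _ (mem_biUnion.mpr ⟨e, he, mem_sdiff.mpr ⟨hxe, hxp⟩⟩)
  have hone : ∀ e ∈ S, #(e \ p) ≤ 1 := fun e he => by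
    rw [card_sdiff_of_subset (hp e he)]
    have := hS e he
    omega
  calc #(S.sup id) ≤ #(p ∪ S.biUnion (· \ p)) := card_le_card hsub
    _ ≤ #p + #(S.biUnion (· \ p)) := card_union_le _ _
    _ ≤ #p + ∑ e ∈ S, #(e \ p) := Nat.add_le_add_left card_biUnion_le _
    _ ≤ #p + ∑ _e ∈ S, 1 := Nat.add_le_add_left (sum_le_sum hone) _
    _ = #p + #S := by rw [← card_eq_sum_ones]

variable {F : Finset (Finset α)} {r k : ℕ}

theorem card_filter_superset_lt_of_free (hF : ∀ e ∈ F, #e = r + 1)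
    (hfree : ∀ S ⊆ F, #S = k → k + r < #(S.sup id)) {p : Finset α} (hp : #p = r) :
    #{e ∈ F | p ⊆ e} < k := by
  by_contra! hk
  obtain ⟨S, hSsub, hScard⟩ := exists_subset_card_eq hk
  have hSF : S ⊆ F := hSsub.trans (filter_subset _ _)
  have hspan := hfree S hSF hScard
  have hbound : #(S.sup id) ≤ #p + #S :=
    card_sup_id_le_of_forall_superset (fun e he => (mem_filter.mp (hSsub he)).2)
      (fun e he => (hF e (hSF he)).trans_le (by omega))
  omega

theorem card_mul_succ_le_choose_mul_of_free [Fintype α] (hF : ∀ e ∈ F, #e = r + 1)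
    (hfree : ∀ S ⊆ F, #S = k → k + r < #(S.sup id)) :
    #F * (r + 1) ≤ (Fintype.card α).choose r * (k - 1) := by
  have habove : ∀ e ∈ F, #{p ∈ (univ : Finset α).powersetCard r | p ⊆ e} = r + 1 := by
    intro e he
    have : {p ∈ (univ : Finset α).powersetCard r | p ⊆ e} = e.powersetCard r := by
      ext p
      simp [mem_powersetCard, and_comm]
    rw [this, card_powersetCard, hF e he, Nat.choose_succ_self_right]
  have hcard := card_mul_le_card_mul (s := F) (t := (univ : Finset α).powersetCard r)
    (fun e p => p ⊆ e) (m := r + 1) (n := k - 1) (fun e he => (habove e he).ge)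
    (fun p hp => Nat.le_sub_one_of_lt <|
      card_filter_superset_lt_of_free hF hfree (mem_powersetCard.mp hp).2)
  rwa [card_powersetCard, card_univ] at hcard

end Finset

theorem brown_erdos_sos_trivial_bound_general {V : Type*} [Fintype V] [DecidableEq V]
    (k : ℕ) (F : Finset (Finset V)) (h3 : ∀ e ∈ F, e.card = 3)
    (hfree : ∀ S ⊆ F, S.card = k → k + 2 < (S.sup id).card) :
    (F.card : ℝ) ≤ (k : ℝ) / 6 * (Fintype.card V : ℝ) ^ 2 := by
  have hcount : ((F.card * 3 : ℕ) : ℝ) ≤ ((Fintype.card V).choose 2 * (k - 1) : ℕ) :=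
    Nat.cast_le.mpr (card_mul_succ_le_choose_mul_of_free h3 hfree)
  have hk : ((k - 1 : ℕ) : ℝ) ≤ k := Nat.cast_le.mpr (Nat.sub_le k 1)
  push_cast [Nat.cast_choose_two] at hcount
  have hn : (0 : ℝ) ≤ Fintype.card V := Nat.cast_nonneg _
  nlinarith [mul_le_mul_of_nonneg_left hk (mul_nonneg hn hn),
    mul_nonneg (mul_nonneg hn hn) (Nat.cast_nonneg (k - 1 : ℕ))]

/-- If `F` is a `(k+2,k)`-free 3-uniform hypergraph on `n` vertices
(no `k` distinct edges span at most `k+2` vertices), then `F` has at most `k/6 * n^2` edges. -/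
theorem brown_erdos_sos_trivial_bound {V : Type*} [Fintype V] [DecidableEq V]
    (k : ℕ) (hk : 2 ≤ k) (F : Finset (Finset V)) (h3 : ∀ e ∈ F, e.card = 3)
    (hfree : ∀ S ⊆ F, S.card = k → k + 2 < (S.sup id).card) :
    (F.card : ℝ) ≤ (k : ℝ) / 6 * (Fintype.card V : ℝ) ^ 2 :=
  brown_erdos_sos_trivial_bound_general k F h3 hfree
end

section
/- Let $k \ge 2$ be an integer, let $F$ be a $(k+2,k)$-free $3$-uniform hypergraph, and let $S$ be a $k$-maximal $(\ell+1,\ell)$-configuration of $F$ for some $\ell \in [2,k-1]$. Then the number of edges of $F$ contained entirely within the vertex set $V(S)$ spanned by $S$ is at most $k-1$. -/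
open Finset

/-- `S` is an `(ℓ+1, ℓ)`-configuration of `F`: a set of `ℓ` edges of `F`
spanning at most `ℓ + 1` vertices. -/
def IsConfig {V : Type*} [DecidableEq V] (F S : Finset (Finset V)) (ℓ : ℕ) : Prop :=
  S ⊆ F ∧ S.card = ℓ ∧ (S.sup id).card ≤ ℓ + 1

/-- If `F` is a `(k+2,k)`-free 3-uniform hypergraph and `S` is a
`k`-maximal `(ℓ+1,ℓ)`-configuration with `ℓ ∈ [2, k-1]`, then at most `k - 1` edges
of `F` lie entirely inside `V(S)`. -/
theorem edges_inside_maximal_config {V : Type*} [DecidableEq V]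
    (k ℓ : ℕ) (hk : 2 ≤ k) (hℓ2 : 2 ≤ ℓ) (hℓk : ℓ ≤ k - 1)
    (F : Finset (Finset V)) (h3 : ∀ e ∈ F, e.card = 3)
    (hfree : ∀ T ⊆ F, T.card = k → k + 2 < (T.sup id).card)
    (S : Finset (Finset V)) (hconf : IsConfig F S ℓ)
    (hmax : ¬ ∃ S' ℓ', IsConfig F S' ℓ' ∧ S ⊆ S' ∧ ℓ < ℓ' ∧ ℓ' ≤ k - 1) :
    (F.filter (fun e => e ⊆ S.sup id)).card ≤ k - 1 := by
  by_contra h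
  push_neg at h
  have hkcard : k ≤ (F.filter (fun e => e ⊆ S.sup id)).card := by omega
  obtain ⟨T, hTsub, hTcard⟩ := Finset.exists_subset_card_eq hkcard
  have hTF : T ⊆ F := hTsub.trans (Finset.filter_subset _ _)
  have hbig := hfree T hTF hTcard
  have hsup : T.sup id ⊆ S.sup id := by
    exact Finset.sup_le fun e he => (Finset.mem_filter.mp (hTsub he)).2
  have h1 : (T.sup id).card ≤ (S.sup id).card := Finset.card_le_card hsup
  have h2 : (S.sup id).card ≤ ℓ + 1 := hconf.2.2
  omega
end

section
/- Let $k \ge 2$ be an integer, let $F$ be a $(k+2,k)$-free $3$-uniform hypergraph, and let $S$ be a $k$-maximal $(\ell+1,\ell)$-configuration of $F$ for some $\ell \in [2,k-1]$. Then there is no edge $e \in E(F)$ with $|e \cap V(S)| = 2$. -/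
open Finset

/-- If `F` is a `(k+2,k)`-free 3-uniform hypergraph and `S` is a
`k`-maximal `(ℓ+1,ℓ)`-configuration with `ℓ ∈ [2, k-1]`, then no edge of `F` meets
`V(S)` in exactly two vertices. -/
theorem no_edge_meets_config_in_two {V : Type*} [DecidableEq V]
    (k ℓ : ℕ) (hk : 2 ≤ k) (hℓ2 : 2 ≤ ℓ) (hℓk : ℓ ≤ k - 1)
    (F : Finset (Finset V)) (h3 : ∀ e ∈ F, e.card = 3)
    (hfree : ∀ T ⊆ F, T.card = k → k + 2 < (T.sup id).card)
    (S : Finset (Finset V)) (hconf : IsConfig F S ℓ)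
    (hmax : ¬ ∃ S' ℓ', IsConfig F S' ℓ' ∧ S ⊆ S' ∧ ℓ < ℓ' ∧ ℓ' ≤ k - 1) :
    ∀ e ∈ F, (e ∩ S.sup id).card ≠ 2 := by
  obtain ⟨hSF, hScard, hSsup⟩ := hconf
  intro e heF he2
  set A := S.sup id with hA
  have he3 : e.card = 3 := h3 e heF
  have heS : e ∉ S := by
    intro heS
    have : e ⊆ A := le_sup (f := id) heS
    rw [inter_eq_left.mpr this, he3] at he2
    omega
  set S' : Finset (Finset V) := insert e S with hS'
  have hS'card : S'.card = ℓ + 1 := by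
    rw [hS', card_insert_of_notMem heS, hScard]
  have hS'F : S' ⊆ F := insert_subset heF hSF
  have hS'sup : S'.sup id = e ∪ A := by
    rw [hS', sup_insert]; rfl
  have hcard : (e ∪ A).card + (e ∩ A).card = e.card + A.card :=
    card_union_add_card_inter e A
  have hS'supcard : (S'.sup id).card ≤ ℓ + 2 := by
    rw [hS'sup]; omega
  rcases Nat.lt_or_ge (ℓ + 1) k with hlt | hge
  · exact hmax ⟨S', ℓ + 1, ⟨hS'F, hS'card, hS'supcard⟩, subset_insert e S,
      Nat.lt_succ_self ℓ, by omega⟩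
  · have hℓ : ℓ + 1 = k := by omega
    have := hfree S' hS'F (by omega)
    omega
end

section
/- Let $k \ge 2$ be an integer, let $F$ be a $(k+2,k)$-free $3$-uniform hypergraph, and let $S$ be a $k$-maximal $(\ell+1,\ell)$-configuration of $F$ for some $\ell \in [2,k-1]$. Then there do not exist two distinct edges $e, f \in E(F)$ with $|e \cap V(S)| = |f \cap V(S)| = 1$ and $e \setminus V(S) = f \setminus V(S)$. -/
open Finset

/-- If `F` is a `(k+2,k)`-free 3-uniform hypergraph and `S` is a
`k`-maximal `(ℓ+1,ℓ)`-configuration with `ℓ ∈ [2, k-1]`, then there are no two distinct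
edges `e, f` of `F`, each meeting `V(S)` in exactly one vertex, with
`e \ V(S) = f \ V(S)`. -/
theorem no_two_pendant_edges_same_outside {V : Type*} [DecidableEq V]
    (k ℓ : ℕ) (hk : 2 ≤ k) (hℓ2 : 2 ≤ ℓ) (hℓk : ℓ ≤ k - 1)
    (F : Finset (Finset V)) (h3 : ∀ e ∈ F, e.card = 3)
    (hfree : ∀ T ⊆ F, T.card = k → k + 2 < (T.sup id).card)
    (S : Finset (Finset V)) (hconf : IsConfig F S ℓ)
    (hmax : ¬ ∃ S' ℓ', IsConfig F S' ℓ' ∧ S ⊆ S' ∧ ℓ < ℓ' ∧ ℓ' ≤ k - 1) :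
    ¬ ∃ e ∈ F, ∃ f ∈ F, e ≠ f ∧ (e ∩ S.sup id).card = 1 ∧ (f ∩ S.sup id).card = 1 ∧
      e \ S.sup id = f \ S.sup id := by
  rintro ⟨e, he, f, hf, hef, he1, hf1, hout⟩
  obtain ⟨hSF, hScard, hSspan⟩ := hconf
  set W := S.sup id with hW
  have heS : e ∉ S := by
    intro h
    have hsub : e ⊆ W := Finset.le_sup (f := id) h
    rw [Finset.inter_eq_left.mpr hsub, h3 e he] at he1
    omega
  have hfS : f ∉ S := by
    intro h
    have hsub : f ⊆ W := Finset.le_sup (f := id) h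
    rw [Finset.inter_eq_left.mpr hsub, h3 f hf] at hf1
    omega
  have hsd : (e \ W).card = 2 := by
    have h1 := Finset.card_sdiff_add_card_inter e W
    rw [he1, h3 e he] at h1
    omega
  -- span of insert e S
  have hspan1 : ((insert e S).sup id).card ≤ ℓ + 3 := by
    rw [Finset.sup_insert]
    have : (id e ⊔ S.sup id) = e ∪ W := rfl
    rw [this]
    have := Finset.card_sdiff_add_card e W
    omega
  -- f ⊆ e ∪ W
  have hfsub : f ⊆ e ∪ W := by
    intro x hx
    by_cases hxW : x ∈ W
    · exact Finset.mem_union_right _ hxW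
    · have : x ∈ f \ W := Finset.mem_sdiff.mpr ⟨hx, hxW⟩
      rw [← hout] at this
      exact Finset.mem_union_left _ (Finset.mem_sdiff.mp this).1
  have hspan2 : ((insert e (insert f S)).sup id).card ≤ ℓ + 3 := by
    have hle : (insert e (insert f S)).sup id ⊆ e ∪ W := by
      rw [Finset.sup_insert, Finset.sup_insert]
      refine Finset.union_subset Finset.subset_union_left
        (Finset.union_subset hfsub Finset.subset_union_right)
    have h1 := Finset.card_le_card hle
    have h2 := Finset.card_sdiff_add_card e W
    omega
  have hcard2 : (insert e (insert f S)).card = ℓ + 2 := by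
    rw [Finset.card_insert_of_notMem (by simp [heS, hef]),
      Finset.card_insert_of_notMem hfS, hScard]
  have hsubF2 : insert e (insert f S) ⊆ F := by
    intro x hx
    simp only [Finset.mem_insert] at hx
    rcases hx with rfl | rfl | hx
    · exact he
    · exact hf
    · exact hSF hx
  have hk3 : 3 ≤ k := by omega
  rcases (by omega : ℓ + 2 ≤ k - 1 ∨ ℓ + 2 = k ∨ ℓ + 1 = k) with h | h | h
  · exact hmax ⟨insert e (insert f S), ℓ + 2,
      ⟨hsubF2, hcard2, hspan2⟩,
      (Finset.subset_insert f S).trans (Finset.subset_insert e _),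
      by omega, h⟩
  · have := hfree _ hsubF2 (by omega)
    omega
  · have hcard1 : (insert e S).card = k := by
      rw [Finset.card_insert_of_notMem heS, hScard]; omega
    have := hfree _ (Finset.insert_subset he hSF) hcard1
    omega
end

section
/- Let $k \ge 2$ be an integer, let $F$ be a $(k+2,k)$-free $3$-uniform hypergraph, and let $S$ be a $k$-maximal $(\ell+1,\ell)$-configuration of $F$ for some $\ell \in [2,k-1]$. Define the graph $H$ with vertex set $V(F) \setminus V(S)$ and edge set $\{T \in \binom{V(H)}{2} : \exists e \in E(F), |e \cap V(S)| = 1, e \setminus V(S) = T\}$. Then $H$ is a forest, each of whose connected components has at most $k - \ell$ vertices. -/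
/-!
Write `W = V(S)`, so `|W| ≤ ℓ + 1`. Every edge of `H` is `e \ W` for a hyperedge `e` meeting `W`
in one vertex, and distinct edges come from distinct hyperedges. Adding to `S` the hyperedges
behind `m` edges of `H` whose endpoints lie in a vertex set `A` therefore gives `ℓ + m` hyperedges
on at most `ℓ + 1 + |A|` vertices. A component with more than `k - ℓ` vertices contains a tree
with `k - ℓ` edges, giving `k` hyperedges on `k + 2` vertices, against `(k+2,k)`-freeness. So a
cycle of `H` has length `m ≤ k - ℓ`, and it gives `ℓ + m` hyperedges on `ℓ + m + 1` vertices: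
against the `k`-maximality of `S` if `ℓ + m < k`, and against freeness if `ℓ + m = k`.
-/

open Finset

/-- The auxiliary graph `H` on `V(F) \ W`: vertices outside `W` are joined when some
edge of `F` meets `W` in exactly one vertex and has the pair as its part outside `W`. -/
def pendantGraph {V : Type*} [DecidableEq V] (F : Finset (Finset V)) (W : Finset V) :
    SimpleGraph V where
  Adj x y := x ≠ y ∧ x ∉ W ∧ y ∉ W ∧ ∃ e ∈ F, (e ∩ W).card = 1 ∧ e \ W = {x, y}
  symm := by
    constructor
    rintro x y ⟨hxy, hx, hy, e, he, h1, h2⟩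
    exact ⟨hxy.symm, hy, hx, e, he, h1, by rw [h2, Finset.pair_comm]⟩
  loopless := by constructor; rintro x ⟨hxx, -⟩; exact hxx rfl

theorem Set.ncard_le_of_forall_finset_subset {α : Type*} {s : Set α} {n : ℕ}
    (h : ∀ B : Finset α, ↑B ⊆ s → B.card ≤ n) : s.ncard ≤ n := by
  rcases s.finite_or_infinite with hs | hs
  · simpa [← Set.ncard_coe_finset] using h hs.toFinset (by simp)
  · rw [hs.ncard]
    exact n.zero_le

namespace SimpleGraph

variable {V : Type*} [DecidableEq V] {G : SimpleGraph V}

theorem Walk.IsTrail.card_toFinset_edges {u v : V} {p : G.Walk u v} (hp : p.IsTrail) :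
    p.edges.toFinset.card = p.length := by
  rw [List.toFinset_card_of_nodup hp.edges_nodup, p.length_edges]

theorem Walk.IsCycle.card_toFinset_support {u : V} {c : G.Walk u u} (hc : c.IsCycle) :
    c.support.toFinset.card = c.length := by
  have hu : u ∈ c.support.tail := Walk.end_mem_tail_support hc.not_nil
  have hsupp : c.support.toFinset = c.support.tail.toFinset := by
    conv_lhs => rw [← c.cons_tail_support]
    rw [List.toFinset_cons, insert_eq_of_mem (List.mem_toFinset.mpr hu)]
  rw [hsupp, List.toFinset_card_of_nodup hc.support_nodup, List.length_tail, c.length_support,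
    Nat.add_sub_cancel]

theorem exists_tree_of_lt_card_reachable {x : V} {B : Finset V} (hB : ∀ y ∈ B, G.Reachable x y)
    {t : ℕ} (ht : t < B.card) :
    ∃ (A : Finset V) (E : Finset (Sym2 V)), x ∈ A ∧ A.card = t + 1 ∧ E.card = t ∧
      ↑E ⊆ G.edgeSet ∧ ∀ e ∈ E, ∀ v ∈ e, v ∈ A := by
  induction t with
  | zero => exact ⟨{x}, ∅, mem_singleton_self x, card_singleton x, card_empty, by simp, by simp⟩
  | succ t ih =>
    obtain ⟨A, E, hxA, hA, hE, hEG, hEA⟩ := ih (by omega)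
    obtain ⟨y, hyB, hyA⟩ : ∃ y ∈ B, y ∉ A := by
      by_contra! hBA
      have := card_le_card hBA
      omega
    obtain ⟨p⟩ := hB y hyB
    obtain ⟨d, -, hdA, hdA'⟩ := p.exists_boundary_dart A hxA (by simpa using hyA)
    have hdE : d.edge ∉ E := fun h => hdA' (hEA _ h _ (Sym2.mem_mk_right _ _))
    refine ⟨insert d.snd A, insert d.edge E, mem_insert_of_mem hxA, ?_, ?_, ?_, ?_⟩
    · rw [card_insert_of_notMem (by simpa using hdA'), hA]
    · rw [card_insert_of_notMem hdE, hE]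
    · rw [coe_insert]
      exact Set.insert_subset d.edge_mem hEG
    · intro e he v hv
      rcases mem_insert.mp he with rfl | he
      · rcases Sym2.mem_iff.mp hv with rfl | rfl
        · exact mem_insert_of_mem hdA
        · exact mem_insert_self _ _
      · exact mem_insert_of_mem (hEA e he v hv)

end SimpleGraph

open SimpleGraph

section Pendant

variable {V : Type*} [DecidableEq V] {F S : Finset (Finset V)} {k ℓ : ℕ}

theorem exists_hyperedge_of_mem_edgeSet_pendantGraph {W : Finset V} {z : Sym2 V}
    (hz : z ∈ (pendantGraph F W).edgeSet) :
    ∃ e ∈ F, (e ∩ W).card = 1 ∧ ∀ v, v ∈ e \ W ↔ v ∈ z := by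
  induction z using Sym2.ind with
  | h x y =>
    obtain ⟨-, -, -, e, he, h1, h2⟩ := hz
    exact ⟨e, he, h1, fun v => by simp [h2]⟩

/-- Distinct edges of the pendant graph come from distinct hyperedges, since a hyperedge `e`
determines its edge `e \ W`. -/
theorem exists_hyperedges_of_subset_edgeSet_pendantGraph {W A : Finset V} {E : Finset (Sym2 V)}
    (hE : ↑E ⊆ (pendantGraph F W).edgeSet) (hEA : ∀ z ∈ E, ∀ v ∈ z, v ∈ A) :
    ∃ P ⊆ F, P.card = E.card ∧ ∀ e ∈ P, (e ∩ W).card = 1 ∧ e \ W ⊆ A := by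
  choose f hfF hfW hfz using fun z : E => exists_hyperedge_of_mem_edgeSet_pendantGraph (hE z.2)
  have hf : Function.Injective f := fun z₁ z₂ h =>
    Subtype.ext (Sym2.ext fun v => by rw [← hfz, ← hfz, h])
  refine ⟨univ.image f, ?_, ?_, ?_⟩
  · intro e he
    obtain ⟨z, -, rfl⟩ := mem_image.mp he
    exact hfF z
  · rw [card_image_of_injective _ hf, card_univ, Fintype.card_coe]
  · simp only [mem_image, mem_univ, true_and]
    rintro _ ⟨z, rfl⟩
    exact ⟨hfW z, fun v hv => hEA z z.2 v ((hfz z v).1 hv)⟩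

theorem IsConfig.union_pendant {P : Finset (Finset V)} {A : Finset V}
    (hS : IsConfig F S ℓ) (h3 : ∀ e ∈ F, e.card = 3) (hPF : P ⊆ F)
    (hP : ∀ e ∈ P, (e ∩ S.sup id).card = 1 ∧ e \ S.sup id ⊆ A) :
    S ∪ P ⊆ F ∧ (S ∪ P).card = ℓ + P.card ∧ ((S ∪ P).sup id).card ≤ ℓ + 1 + A.card := by
  obtain ⟨hSF, hScard, hSV⟩ := hS
  have hSW : ∀ e ∈ S, e ⊆ S.sup id := fun e he => le_sup (f := id) he
  have hdisj : Disjoint S P := disjoint_left.mpr fun e heS heP => by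
    have h1 := (hP e heP).1
    rw [inter_eq_left.mpr (hSW e heS), h3 e (hSF heS)] at h1
    omega
  have hsup : (S ∪ P).sup id ⊆ S.sup id ∪ A := Finset.sup_le fun e he => by
    rcases mem_union.mp he with he | he
    · exact (hSW e he).trans subset_union_left
    · exact sdiff_le_iff.mp (hP e he).2
  refine ⟨union_subset hSF hPF, by rw [card_union_of_disjoint hdisj, hScard], ?_⟩
  calc ((S ∪ P).sup id).card ≤ (S.sup id ∪ A).card := card_le_card hsup
    _ ≤ (S.sup id).card + A.card := card_union_le _ _
    _ ≤ ℓ + 1 + A.card := by omega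

theorem IsConfig.exists_extension_of_pendantGraph {A : Finset V} {E : Finset (Sym2 V)}
    (hS : IsConfig F S ℓ) (h3 : ∀ e ∈ F, e.card = 3)
    (hE : ↑E ⊆ (pendantGraph F (S.sup id)).edgeSet) (hEA : ∀ z ∈ E, ∀ v ∈ z, v ∈ A) :
    ∃ T, S ⊆ T ∧ T ⊆ F ∧ T.card = ℓ + E.card ∧ (T.sup id).card ≤ ℓ + 1 + A.card := by
  obtain ⟨P, hPF, hPE, hP⟩ := exists_hyperedges_of_subset_edgeSet_pendantGraph hE hEA
  obtain ⟨hTF, hT, hTV⟩ := hS.union_pendant h3 hPF hP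
  exact ⟨S ∪ P, subset_union_left, hTF, hPE ▸ hT, hTV⟩

theorem card_le_of_forall_reachable_pendantGraph (hℓk : ℓ ≤ k - 1)
    (h3 : ∀ e ∈ F, e.card = 3) (hfree : ∀ T ⊆ F, T.card = k → k + 2 < (T.sup id).card)
    (hS : IsConfig F S ℓ) {x : V} {B : Finset V}
    (hB : ∀ y ∈ B, (pendantGraph F (S.sup id)).Reachable x y) : B.card ≤ k - ℓ := by
  by_contra! hlt
  obtain ⟨A, E, -, hA, hE, hEH, hEA⟩ := exists_tree_of_lt_card_reachable hB hlt
  obtain ⟨T, -, hTF, hT, hTV⟩ := hS.exists_extension_of_pendantGraph h3 hEH hEA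
  have := hfree T hTF (by omega)
  omega

theorem isAcyclic_pendantGraph (hℓk : ℓ ≤ k - 1)
    (h3 : ∀ e ∈ F, e.card = 3) (hfree : ∀ T ⊆ F, T.card = k → k + 2 < (T.sup id).card)
    (hS : IsConfig F S ℓ)
    (hmax : ¬ ∃ S' ℓ', IsConfig F S' ℓ' ∧ S ⊆ S' ∧ ℓ < ℓ' ∧ ℓ' ≤ k - 1) :
    (pendantGraph F (S.sup id)).IsAcyclic := by
  intro x c hc
  have hm : c.length ≤ k - ℓ := hc.card_toFinset_support ▸
    card_le_of_forall_reachable_pendantGraph hℓk h3 hfree hS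
      fun y hy => ⟨c.takeUntil y (List.mem_toFinset.mp hy)⟩
  obtain ⟨T, hST, hTF, hT, hTV⟩ := hS.exists_extension_of_pendantGraph h3
    (E := c.edges.toFinset) (A := c.support.toFinset)
    (fun z hz => c.edges_subset_edgeSet (List.mem_toFinset.mp hz))
    fun z hz v hv =>
      List.mem_toFinset.mpr (c.mem_support_of_mem_edges (List.mem_toFinset.mp hz) hv)
  rw [hc.isTrail.card_toFinset_edges] at hT
  rw [hc.card_toFinset_support] at hTV
  by_cases hsmall : ℓ + c.length ≤ k - 1
  · exact hmax ⟨T, ℓ + c.length, ⟨hTF, hT, by omega⟩, hST, by have := hc.three_le_length; omega,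
      hsmall⟩
  · have := hfree T hTF (by omega)
    omega

end Pendant

theorem pendantGraph_isForest_small_components_general {V : Type*} [DecidableEq V]
    (k ℓ : ℕ) (hℓk : ℓ ≤ k - 1)
    (F : Finset (Finset V)) (h3 : ∀ e ∈ F, e.card = 3)
    (hfree : ∀ T ⊆ F, T.card = k → k + 2 < (T.sup id).card)
    (S : Finset (Finset V)) (hconf : IsConfig F S ℓ)
    (hmax : ¬ ∃ S' ℓ', IsConfig F S' ℓ' ∧ S ⊆ S' ∧ ℓ < ℓ' ∧ ℓ' ≤ k - 1) :
    (pendantGraph F (S.sup id)).IsAcyclic ∧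
      ∀ x : V, {y | (pendantGraph F (S.sup id)).Reachable x y}.ncard ≤ k - ℓ :=
  ⟨isAcyclic_pendantGraph hℓk h3 hfree hconf hmax, fun _ =>
    Set.ncard_le_of_forall_finset_subset fun _ hB =>
      card_le_of_forall_reachable_pendantGraph hℓk h3 hfree hconf hB⟩

/-- If `F` is a `(k+2,k)`-free 3-uniform hypergraph and `S` is a
`k`-maximal `(ℓ+1,ℓ)`-configuration with `ℓ ∈ [2, k-1]`, then the pendant graph `H`
on `V(F) \ V(S)` is a forest whose components have at most `k - ℓ` vertices. -/
theorem pendantGraph_isForest_small_components {V : Type*} [Fintype V] [DecidableEq V]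
    (k ℓ : ℕ) (hk : 2 ≤ k) (hℓ2 : 2 ≤ ℓ) (hℓk : ℓ ≤ k - 1)
    (F : Finset (Finset V)) (h3 : ∀ e ∈ F, e.card = 3)
    (hfree : ∀ T ⊆ F, T.card = k → k + 2 < (T.sup id).card)
    (S : Finset (Finset V)) (hconf : IsConfig F S ℓ)
    (hmax : ¬ ∃ S' ℓ', IsConfig F S' ℓ' ∧ S ⊆ S' ∧ ℓ < ℓ' ∧ ℓ' ≤ k - 1) :
    (pendantGraph F (S.sup id)).IsAcyclic ∧
      ∀ x : V, {y | (pendantGraph F (S.sup id)).Reachable x y}.ncard ≤ k - ℓ :=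
  pendantGraph_isForest_small_components_general k ℓ hℓk F h3 hfree S hconf hmax
end

section
/- Let $k \ge 2$ be an integer, let $F$ be a $(k+2,k)$-free $3$-uniform hypergraph, and let $S$ be a $k$-maximal $(\ell+1,\ell)$-configuration of $F$ for some $\ell \in [2,k-1]$. Then $e(F) - e(F \setminus V(S)) \le (1 - \frac{1}{k})(v(F) - v(S)) + (k-1)$, where $F \setminus V(S)$ denotes the subhypergraph of $F$ induced on $V(F) \setminus V(S)$. -/
open Finset

lemma grow {V : Type*} [DecidableEq V] (E : Finset (Finset V))
    (h2 : ∀ p ∈ E, p.card = 2)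
    (hconn : ∀ A ⊆ E, A.Nonempty → A ≠ E → ¬ Disjoint (A.sup id) ((E \ A).sup id)) :
    ∀ n, 1 ≤ n → n ≤ E.card → ∃ A ⊆ E, A.card = n ∧ (A.sup id).card ≤ n + 1 := by
  intro n
  induction n with
  | zero => omega
  | succ m ih =>
    intro _ hle
    rcases Nat.eq_or_lt_of_le (Nat.one_le_iff_ne_zero.mpr (by omega) : 1 ≤ m + 1) with h1 | h1
    · -- m = 0
      have hm : m = 0 := by omega
      subst hm
      obtain ⟨e, he⟩ : E.Nonempty := Finset.card_pos.mp (by omega)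
      refine ⟨{e}, by simpa using he, by simp, ?_⟩
      simp [h2 e he]
    · -- m ≥ 1
      obtain ⟨A, hAE, hAcard, hAsup⟩ := ih (by omega) (by omega)
      have hAne : A ≠ E := by
        intro h; subst h; omega
      have hAnonempty : A.Nonempty := Finset.card_pos.mp (by omega)
      have := hconn A hAE hAnonempty hAne
      rw [Finset.not_disjoint_iff] at this
      obtain ⟨x, hx1, hx2⟩ := this
      rw [Finset.mem_sup] at hx2
      obtain ⟨f, hf, hxf⟩ := hx2
      have hfE : f ∈ E := (Finset.mem_sdiff.mp hf).1
      have hfA : f ∉ A := (Finset.mem_sdiff.mp hf).2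
      refine ⟨insert f A, Finset.insert_subset hfE hAE, ?_, ?_⟩
      · rw [Finset.card_insert_of_notMem hfA, hAcard]
      · have hsup : (insert f A).sup id = f ∪ A.sup id := by
          rw [Finset.sup_insert]; rfl
        rw [hsup]
        have : f ∪ A.sup id = (f \ A.sup id) ∪ A.sup id := by
          rw [Finset.sdiff_union_self_eq_union]
        rw [this]
        have hft : (f \ A.sup id).card ≤ 1 := by
          have : f \ A.sup id ⊆ f \ {x} := by
            apply Finset.sdiff_subset_sdiff (le_refl _)
            simpa using hx1
          have h1 := Finset.card_le_card this
          have h2' : (f \ {x}).card ≤ 1 := by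
            have hx : x ∈ f := hxf
            have h4 : (f \ {x}).card = f.card - 1 := by
              rw [Finset.card_sdiff_of_subset (by simpa using hx)]; simp
            have h5 := h2 f hfE
            omega
          omega
        calc ((f \ A.sup id) ∪ A.sup id).card ≤ (f \ A.sup id).card + (A.sup id).card :=
              Finset.card_union_le _ _
          _ ≤ 1 + (m + 1) := by omega
          _ = m + 1 + 1 := by omega

lemma graphLemma {V : Type*} [DecidableEq V] (u : ℕ) :
    ∀ G : Finset (Finset V), (∀ p ∈ G, p.card = 2) →
    (∀ E' ⊆ G, E'.Nonempty → E'.card ≤ u → E'.card + 1 ≤ (E'.sup id).card) →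
    (∀ E' ⊆ G, E'.card = u + 1 → u + 3 ≤ (E'.sup id).card) →
    (u + 1) * G.card ≤ u * (G.sup id).card := by
  intro G
  induction G using Finset.strongInduction with
  | _ G ih =>
    intro h2 hi hii
    rcases G.eq_empty_or_nonempty with rfl | hne
    · simp
    · -- find minimal "separated" nonempty subset
      classical
      set 𝒮 := G.powerset.filter
        (fun E => E.Nonempty ∧ Disjoint (E.sup id) ((G \ E).sup id)) with h𝒮
      have hG𝒮 : G ∈ 𝒮 := by
        simp [h𝒮, Finset.mem_filter, Finset.mem_powerset, hne]
      obtain ⟨E₀, hE₀mem, hE₀min⟩ := 𝒮.exists_min_image Finset.card ⟨G, hG𝒮⟩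
      rw [h𝒮, Finset.mem_filter, Finset.mem_powerset] at hE₀mem
      obtain ⟨hE₀G, hE₀ne, hE₀disj⟩ := hE₀mem
      -- connectivity of E₀
      have hconn : ∀ A ⊆ E₀, A.Nonempty → A ≠ E₀ →
          ¬ Disjoint (A.sup id) ((E₀ \ A).sup id) := by
        intro A hAE hAne hAneq hdisj
        have hAG : A ⊆ G := hAE.trans hE₀G
        have hsplit : G \ A = (E₀ \ A) ∪ (G \ E₀) := by
          ext x
          simp only [Finset.mem_sdiff, Finset.mem_union]
          constructor
          · rintro ⟨hxG, hxA⟩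
            by_cases hx : x ∈ E₀
            · exact Or.inl ⟨hx, hxA⟩
            · exact Or.inr ⟨hxG, hx⟩
          · rintro (⟨hx, hxA⟩ | ⟨hxG, hx⟩)
            · exact ⟨hE₀G hx, hxA⟩
            · exact ⟨hxG, fun h => hx (hAE h)⟩
        have hd2 : Disjoint (A.sup id) ((G \ A).sup id) := by
          rw [hsplit, Finset.sup_union]
          refine Finset.disjoint_union_right.mpr ⟨hdisj, ?_⟩
          exact Finset.disjoint_of_subset_left
            (Finset.sup_mono hAE) hE₀disj
        have hA𝒮 : A ∈ 𝒮 := by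
          simp only [h𝒮, Finset.mem_filter, Finset.mem_powerset]
          exact ⟨hAG, hAne, hd2⟩
        have := hE₀min A hA𝒮
        have hAlt : A ⊂ E₀ := lt_of_le_of_ne hAE hAneq
        have := Finset.card_lt_card hAlt
        omega
      have hE₀p : ∀ p ∈ E₀, p.card = 2 := fun p hp => h2 p (hE₀G hp)
      -- E₀.card ≤ u
      have hcard_le : E₀.card ≤ u := by
        by_contra h
        push_neg at h
        obtain ⟨A, hAE, hAcard, hAsup⟩ := grow E₀ hE₀p hconn (u + 1) (by omega) (by omega)
        have := hii A (hAE.trans hE₀G) hAcard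
        omega
      -- span of E₀ is exactly card + 1
      have hspan_le : (E₀.sup id).card ≤ E₀.card + 1 := by
        obtain ⟨A, hAE, hAcard, hAsup⟩ := grow E₀ hE₀p hconn E₀.card
          (Finset.card_pos.mpr hE₀ne) (le_refl _)
        have : A = E₀ := Finset.eq_of_subset_of_card_le hAE (by omega)
        subst this
        exact hAsup
      have hspan_ge : E₀.card + 1 ≤ (E₀.sup id).card := hi E₀ hE₀G hE₀ne hcard_le
      -- recurse on G \ E₀
      have hG'ss : G \ E₀ ⊂ G := by
        apply Finset.sdiff_ssubset hE₀G hE₀ne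
      have hrec := ih (G \ E₀) hG'ss (fun p hp => h2 p (Finset.mem_sdiff.mp hp).1)
        (fun E' hE' => hi E' (hE'.trans (Finset.sdiff_subset)))
        (fun E' hE' => hii E' (hE'.trans (Finset.sdiff_subset)))
      -- combine
      have hcards : E₀.card + (G \ E₀).card = G.card := by
        rw [add_comm]; exact Finset.card_sdiff_add_card_eq_card hE₀G
      have hsupG : G.sup id = E₀.sup id ∪ (G \ E₀).sup id := by
        conv_lhs => rw [← Finset.union_sdiff_of_subset hE₀G]
        rw [Finset.sup_union]; rfl
      have hsupcard : (G.sup id).card = (E₀.sup id).card + ((G \ E₀).sup id).card := by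
        rw [hsupG, Finset.card_union_of_disjoint hE₀disj]
      have key : (u + 1) * E₀.card ≤ u * (E₀.sup id).card := by
        have h1 : (E₀.sup id).card = E₀.card + 1 := le_antisymm hspan_le hspan_ge
        rw [h1]
        nlinarith [hcard_le]
      calc (u + 1) * G.card = (u + 1) * E₀.card + (u + 1) * (G \ E₀).card := by
            rw [← hcards]; ring
        _ ≤ u * (E₀.sup id).card + u * ((G \ E₀).sup id).card := by omega
        _ = u * (G.sup id).card := by rw [hsupcard]; ring

/-- If `F` is a `(k+2,k)`-free 3-uniform hypergraph and `S` is a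
`k`-maximal `(ℓ+1,ℓ)`-configuration with `ℓ ∈ [2, k-1]`, then deleting `V(S)` loses at
most `(1 - 1/k)(v(F) - v(S)) + (k - 1)` edges. -/
theorem edges_lost_deleting_maximal_config {V : Type*} [Fintype V] [DecidableEq V]
    (k ℓ : ℕ) (hk : 2 ≤ k) (hℓ2 : 2 ≤ ℓ) (hℓk : ℓ ≤ k - 1)
    (F : Finset (Finset V)) (h3 : ∀ e ∈ F, e.card = 3)
    (hfree : ∀ T ⊆ F, T.card = k → k + 2 < (T.sup id).card)
    (S : Finset (Finset V)) (hconf : IsConfig F S ℓ)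
    (hmax : ¬ ∃ S' ℓ', IsConfig F S' ℓ' ∧ S ⊆ S' ∧ ℓ < ℓ' ∧ ℓ' ≤ k - 1) :
    (F.card : ℝ) - (F.filter (fun e => Disjoint e (S.sup id))).card ≤
      (1 - 1 / (k : ℝ)) * ((Fintype.card V : ℝ) - (S.sup id).card) + ((k : ℝ) - 1) := by
  classical
  obtain ⟨hSF, hScard, hUcard⟩ := hconf
  set U := S.sup id with hU
  set L := F.filter (fun e => ¬ Disjoint e U) with hL
  -- LHS equals card of lost edges L
  have hsplitF : (F.filter (fun e => Disjoint e U)).card + L.card = F.card := by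
    rw [hL]; exact Finset.card_filter_add_card_filter_not _
  have hLHS : (F.card : ℝ) - ((F.filter (fun e => Disjoint e U)).card : ℝ) = L.card := by
    push_cast [← hsplitF]; ring
  rw [hLHS]
  -- basic facts
  have hn : U.card ≤ Fintype.card V := Finset.card_le_univ U
  have hk0 : (0:ℝ) < k := by
    have : (0:ℕ) < k := by omega
    exact_mod_cast this
  have hkinv : (0:ℝ) ≤ 1 - 1 / k := by
    have h1 : 1 / (k:ℝ) ≤ 1 := by
      rw [div_le_one hk0]; exact_mod_cast by omega
    linarith
  have hnU : (0:ℝ) ≤ (Fintype.card V : ℝ) - U.card := by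
    have : (U.card : ℝ) ≤ Fintype.card V := by exact_mod_cast hn
    linarith
  have hLF : L ⊆ F := Finset.filter_subset _ _
  have hSL : S ⊆ L := by
    intro e he
    rw [hL, Finset.mem_filter]
    refine ⟨hSF he, ?_⟩
    intro hd
    have heU : e ⊆ U := by rw [hU]; exact Finset.le_sup (f := id) he
    have hecard := h3 e (hSF he)
    obtain ⟨x, hx⟩ : e.Nonempty := Finset.card_pos.mp (by omega)
    exact (Finset.disjoint_left.mp hd hx) (heU hx)
  have hmemL : ∀ e ∈ L, e ∈ F ∧ ¬ Disjoint e U := by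
    intro e he
    rw [hL, Finset.mem_filter] at he
    exact he
  -- spanned-vertex bound for an edge meeting U
  have hediff : ∀ e ∈ L, (e \ U).card ≤ 2 := by
    intro e he
    obtain ⟨heF, hnd⟩ := hmemL e he
    obtain ⟨x, hx1, hx2⟩ := Finset.not_disjoint_iff.mp hnd
    have hsub : e \ U ⊆ e \ {x} := by
      apply Finset.sdiff_subset_sdiff (le_refl _)
      simpa using hx2
    have h1 := Finset.card_le_card hsub
    have h2 : (e \ {x}).card = e.card - 1 := by
      rw [Finset.card_sdiff_of_subset (by simpa using hx1)]; simp
    have := h3 e heF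
    omega
  -- sup of insert
  have hsupins : ∀ (e : Finset V) (T : Finset (Finset V)),
      (insert e T).sup id = e ∪ T.sup id := by
    intro e T; rw [Finset.sup_insert]; rfl
  -- sup of S-union bound: for T'' ⊆ L \ S,  (S ∪ T'').sup id ⊆ U ∪ (image sdiff).sup
  by_cases hcase : ℓ + 2 ≤ k
  · -- main case
    set u := k - ℓ - 1 with hu
    have hku : k = ℓ + u + 1 := by omega
    have hu1 : 1 ≤ u := by omega
    set D := L \ S with hD
    have hDL : D ⊆ L := Finset.sdiff_subset
    have hDS : Disjoint D S := Finset.sdiff_disjoint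
    -- each lost edge outside S has exactly 2 vertices outside U
    have hc1 : ∀ e ∈ D, (e \ U).card = 2 := by
      intro e heD
      have heL := hDL heD
      have heS : e ∉ S := (Finset.mem_sdiff.mp heD).2
      obtain ⟨heF, hnd⟩ := hmemL e heL
      have hle := hediff e heL
      by_contra hne2
      have hle1 : (e \ U).card ≤ 1 := by omega
      apply hmax
      refine ⟨insert e S, ℓ + 1, ⟨?_, ?_, ?_⟩, Finset.subset_insert _ _, by omega, by omega⟩
      · exact Finset.insert_subset heF hSF
      · rw [Finset.card_insert_of_notMem heS, hScard]
      · rw [hsupins]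
        have : e ∪ U ⊆ (e \ U) ∪ U := by
          intro x hx
          rcases Finset.mem_union.mp hx with h | h
          · by_cases hxU : x ∈ U
            · exact Finset.mem_union_right _ hxU
            · exact Finset.mem_union_left _ (Finset.mem_sdiff.mpr ⟨h, hxU⟩)
          · exact Finset.mem_union_right _ h
        calc (e ∪ U).card ≤ ((e \ U) ∪ U).card := Finset.card_le_card this
          _ ≤ (e \ U).card + U.card := Finset.card_union_le _ _
          _ ≤ 1 + (ℓ + 1) := by omega
          _ = ℓ + 1 + 1 := by omega
    -- injectivity of e ↦ e \ U on D
    have hc2 : Set.InjOn (fun e => e \ U) ↑D := by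
      intro e heD f hfD hef0
      have hef : e \ U = f \ U := hef0
      simp only [Finset.mem_coe] at heD hfD
      by_contra hne
      have heS : e ∉ S := (Finset.mem_sdiff.mp heD).2
      have hfS : f ∉ S := (Finset.mem_sdiff.mp hfD).2
      obtain ⟨heF, hnde⟩ := hmemL e (hDL heD)
      obtain ⟨hfF, hndf⟩ := hmemL f (hDL hfD)
      have heins : e ∉ insert f S := by
        simp only [Finset.mem_insert]
        push_neg
        exact ⟨hne, heS⟩
      set T := insert e (insert f S) with hT
      have hTF : T ⊆ F := by
        rw [hT]
        exact Finset.insert_subset heF (Finset.insert_subset hfF hSF)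
      have hTcard : T.card = ℓ + 2 := by
        rw [hT, Finset.card_insert_of_notMem heins,
          Finset.card_insert_of_notMem hfS, hScard]
      have hTsup : (T.sup id).card ≤ ℓ + 3 := by
        rw [hT, hsupins, hsupins]
        have hsub : e ∪ (f ∪ U) ⊆ (e \ U) ∪ U := by
          intro x hx
          by_cases hxU : x ∈ U
          · exact Finset.mem_union_right _ hxU
          · rcases Finset.mem_union.mp hx with h | h
            · exact Finset.mem_union_left _ (Finset.mem_sdiff.mpr ⟨h, hxU⟩)
            · rcases Finset.mem_union.mp h with h' | h'
              · refine Finset.mem_union_left _ ?_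
                rw [hef]
                exact Finset.mem_sdiff.mpr ⟨h', hxU⟩
              · exact Finset.mem_union_right _ h'
        calc (e ∪ (f ∪ U)).card ≤ ((e \ U) ∪ U).card := Finset.card_le_card hsub
          _ ≤ (e \ U).card + U.card := Finset.card_union_le _ _
          _ ≤ 2 + (ℓ + 1) := by
              have := hc1 e heD
              omega
          _ = ℓ + 3 := by omega
      rcases Nat.lt_or_ge (ℓ + 2) k with hlt | hge
      · exact hmax ⟨T, ℓ + 2, ⟨hTF, hTcard, hTsup⟩,
          (Finset.subset_insert _ _).trans (Finset.subset_insert _ _), by omega, by omega⟩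
      · have hk2 : ℓ + 2 = k := by omega
        have := hfree T hTF (by omega)
        omega
    set G := D.image (fun e => e \ U) with hG
    have hGcard : G.card = D.card := Finset.card_image_of_injOn hc2
    have hGp : ∀ p ∈ G, p.card = 2 := by
      intro p hp
      obtain ⟨e, heD, rfl⟩ := Finset.mem_image.mp hp
      exact hc1 e heD
    have hGU : Disjoint (G.sup id) U := by
      rw [Finset.disjoint_left]
      intro x hx
      rw [Finset.mem_sup] at hx
      obtain ⟨p, hp, hxp⟩ := hx
      obtain ⟨e, heD, rfl⟩ := Finset.mem_image.mp hp
      exact (Finset.mem_sdiff.mp hxp).2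
    -- the generic configuration construction
    have hTgen : ∀ E' ⊆ G, ∃ T : Finset (Finset V), T ⊆ F ∧ S ⊆ T ∧
        T.card = ℓ + E'.card ∧ (T.sup id).card ≤ ℓ + 1 + (E'.sup id).card := by
      intro E' hE'G
      set E'' := D.filter (fun e => e \ U ∈ E') with hE''
      have hE''D : E'' ⊆ D := Finset.filter_subset _ _
      have himg : E''.image (fun e => e \ U) = E' := by
        apply Finset.Subset.antisymm
        · intro p hp
          obtain ⟨e, he, rfl⟩ := Finset.mem_image.mp hp
          exact (Finset.mem_filter.mp he).2
        · intro p hp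
          obtain ⟨e, heD, rfl⟩ := Finset.mem_image.mp (hE'G hp)
          exact Finset.mem_image.mpr ⟨e, Finset.mem_filter.mpr ⟨heD, hp⟩, rfl⟩
      have hE''card : E''.card = E'.card := by
        rw [← himg, Finset.card_image_of_injOn (hc2.mono (by
          intro x hx
          exact hE''D hx))]
      refine ⟨S ∪ E'', Finset.union_subset hSF ((hE''D.trans hDL).trans hLF),
        Finset.subset_union_left, ?_, ?_⟩
      · rw [Finset.card_union_of_disjoint
          (Finset.disjoint_of_subset_right hE''D hDS.symm), hScard, hE''card]
      · have hsub : (S ∪ E'').sup id ⊆ U ∪ E'.sup id := by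
          rw [Finset.sup_union]
          intro x hx
          rcases Finset.mem_union.mp hx with h | h
          · exact Finset.mem_union_left _ h
          · rw [Finset.mem_sup] at h
            obtain ⟨e, heE'', hxe⟩ := h
            by_cases hxU : x ∈ U
            · exact Finset.mem_union_left _ hxU
            · refine Finset.mem_union_right _ ?_
              rw [Finset.mem_sup]
              exact ⟨e \ U, (Finset.mem_filter.mp heE'').2,
                Finset.mem_sdiff.mpr ⟨hxe, hxU⟩⟩
        calc ((S ∪ E'').sup id).card ≤ (U ∪ E'.sup id).card := Finset.card_le_card hsub
          _ ≤ U.card + (E'.sup id).card := Finset.card_union_le _ _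
          _ ≤ ℓ + 1 + (E'.sup id).card := by omega
    -- condition (i)
    have hi : ∀ E' ⊆ G, E'.Nonempty → E'.card ≤ u → E'.card + 1 ≤ (E'.sup id).card := by
      intro E' hE'G hne hcard
      by_contra h
      push_neg at h
      obtain ⟨T, hTF, hST, hTcard, hTsup⟩ := hTgen E' hE'G
      have hne1 : 1 ≤ E'.card := Finset.card_pos.mpr hne
      exact hmax ⟨T, ℓ + E'.card, ⟨hTF, hTcard, by omega⟩, hST, by omega, by omega⟩
    -- condition (ii)
    have hii : ∀ E' ⊆ G, E'.card = u + 1 → u + 3 ≤ (E'.sup id).card := by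
      intro E' hE'G hcard
      by_contra h
      push_neg at h
      obtain ⟨T, hTF, hST, hTcard, hTsup⟩ := hTgen E' hE'G
      have := hfree T hTF (by omega)
      omega
    have hmain := graphLemma u G hGp hi hii
    -- cardinalities
    have hLcard : L.card = D.card + ℓ := by
      rw [hD, ← hScard]
      exact (Finset.card_sdiff_add_card_eq_card hSL).symm
    have hspan : (G.sup id).card + U.card ≤ Fintype.card V := by
      rw [← Finset.card_union_of_disjoint hGU]
      exact Finset.card_le_univ _
    -- real arithmetic
    set d := D.card with hd
    set s := (G.sup id).card with hs
    have hmain' : ((u:ℝ) + 1) * d ≤ u * s := by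
      have : (u + 1) * d ≤ u * s := by rw [hGcard] at hmain; exact hmain
      exact_mod_cast this
    have hspan' : (s:ℝ) + U.card ≤ Fintype.card V := by exact_mod_cast hspan
    have hkR : (k:ℝ) = ℓ + u + 1 := by exact_mod_cast hku
    have hd0 : (0:ℝ) ≤ d := Nat.cast_nonneg _
    have hs0 : (0:ℝ) ≤ s := Nat.cast_nonneg _
    have hu0 : (1:ℝ) ≤ u := by exact_mod_cast hu1
    have hl2 : (2:ℝ) ≤ ℓ := by exact_mod_cast hℓ2
    have hkd : (k:ℝ) * d ≤ ((k:ℝ) - 1) * ((Fintype.card V : ℝ) - U.card) := by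
      nlinarith [mul_nonneg hs0 (by linarith : (0:ℝ) ≤ (ℓ:ℝ)), mul_nonneg hd0 (by linarith : (0:ℝ) ≤ (u:ℝ)),
        mul_le_mul_of_nonneg_left hspan' (by linarith : (0:ℝ) ≤ (k:ℝ) - 1)]
    have hdle : (d:ℝ) ≤ (1 - 1 / k) * ((Fintype.card V : ℝ) - U.card) := by
      have heq : (1 - 1 / (k:ℝ)) * ((Fintype.card V : ℝ) - U.card) =
          (((k:ℝ) - 1) * ((Fintype.card V : ℝ) - U.card)) / k := by
        field_simp
      rw [heq, le_div_iff₀ hk0]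
      linarith [hkd]
    have hLR : (L.card : ℝ) = d + ℓ := by
      rw [hLcard]; push_cast; ring
    rw [hLR]
    have hlk : (ℓ:ℝ) ≤ (k:ℝ) - 1 := by
      rw [hkR]; linarith
    linarith
  · -- case ℓ = k - 1 : no lost edges outside S
    have hlk1 : ℓ = k - 1 := by omega
    have hLS : L ⊆ S := by
      intro e he
      by_contra heS
      obtain ⟨heF, hnd⟩ := hmemL e he
      have hTF : insert e S ⊆ F := Finset.insert_subset heF hSF
      have hTcard : (insert e S).card = k := by
        rw [Finset.card_insert_of_notMem heS, hScard]; omega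
      have := hfree _ hTF hTcard
      have hsup : ((insert e S).sup id).card ≤ k + 2 := by
        rw [hsupins]
        have hsub : e ∪ U ⊆ (e \ U) ∪ U := by
          intro x hx
          by_cases hxU : x ∈ U
          · exact Finset.mem_union_right _ hxU
          · rcases Finset.mem_union.mp hx with h | h
            · exact Finset.mem_union_left _ (Finset.mem_sdiff.mpr ⟨h, hxU⟩)
            · exact absurd h hxU
        calc (e ∪ U).card ≤ ((e \ U) ∪ U).card := Finset.card_le_card hsub
          _ ≤ (e \ U).card + U.card := Finset.card_union_le _ _
          _ ≤ 2 + (ℓ + 1) := by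
              have := hediff e he
              omega
          _ ≤ k + 2 := by omega
      omega
    have hLle : L.card ≤ k - 1 := by
      calc L.card ≤ S.card := Finset.card_le_card hLS
        _ = ℓ := hScard
        _ ≤ k - 1 := hℓk
    have hLR : (L.card : ℝ) ≤ (k:ℝ) - 1 := by
      have h1 : (L.card : ℝ) ≤ ((k - 1 : ℕ) : ℝ) := by exact_mod_cast hLle
      have h2 : ((k - 1 : ℕ) : ℝ) = (k:ℝ) - 1 := by
        have : 1 ≤ k := by omega
        push_cast [this]
        ring
      linarith
    nlinarith [mul_nonneg hkinv hnU]
end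

section
/- Let $k \ge 2$ be an integer and let $F$ be a $3$-uniform hypergraph that is $(k+2,k)$-free and also $(\ell+1,\ell)$-free for all $\ell \in [2,k-1]$. Let $H$ be the graph whose vertices are the edges of $F$, with two edges of $F$ adjacent if they share at least $2$ vertices. If $T$ is a connected subgraph of $H$, then the $2$-shadow of $V(T)$ in $F$ (the set of all $2$-element subsets of vertices of $F$ contained in some edge belonging to $V(T)$) has exactly $2 \cdot v(T) + 1$ elements. -/
/-!
Build `T` up one edge at a time, each new edge sharing two vertices with an edge already
present (possible by connectivity). Such an edge adds at most one vertex, and the freeness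
conditions say that it adds at least one and that the growing cluster never reaches `k` edges.
So a partial cluster of `n` edges spans exactly `n + 2` vertices, the new edge meets it exactly
in the pair it shares with its neighbour, and its two other pairs are new to the shadow.
-/

open Finset

section PairShadow

variable {V : Type*} [DecidableEq V]

def pairShadow (S : Finset (Finset V)) : Finset (Finset V) :=
  S.biUnion (powersetCard 2)

/-- Connectivity of the graph on `𝒯` joining two members that share two vertices, phrased
through cuts. -/
def IsPairLinked (𝒯 : Finset (Finset V)) : Prop :=
  ∀ S ⊆ 𝒯, S.Nonempty → S ≠ 𝒯 → ∃ e ∈ 𝒯 \ S, ∃ f ∈ S, 2 ≤ (e ∩ f).card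

lemma pairShadow_insert (e : Finset V) (S : Finset (Finset V)) :
    pairShadow (insert e S) = e.powersetCard 2 ∪ pairShadow S :=
  biUnion_insert

lemma pairShadow_inter_powersetCard {S : Finset (Finset V)} {e f : Finset V} (hf : f ∈ S)
    (hef : e ∩ S.sup id ⊆ f) :
    pairShadow S ∩ e.powersetCard 2 = (e ∩ S.sup id).powersetCard 2 := by
  ext P
  simp only [pairShadow, mem_inter, mem_biUnion, mem_powersetCard, subset_inter_iff]
  constructor
  · rintro ⟨⟨g, hg, hPg, h2⟩, hPe, -⟩
    exact ⟨⟨hPe, hPg.trans (le_sup (f := id) hg)⟩, h2⟩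
  · rintro ⟨⟨hPe, hPW⟩, h2⟩
    exact ⟨⟨f, hf, (subset_inter hPe hPW).trans hef, h2⟩, hPe, h2⟩

lemma card_pairShadow_insert {S : Finset (Finset V)} {e f : Finset V} (he : e.card = 3)
    (hf : f ∈ S) (hef : 2 ≤ (e ∩ f).card) (hsup : (e ∪ S.sup id).card = (S.sup id).card + 1) :
    (pairShadow (insert e S)).card = (pairShadow S).card + 2 := by
  have hcap : (e ∩ S.sup id).card = 2 := by
    have := card_union_add_card_inter e (S.sup id)
    omega
  have hef_eq : e ∩ f = e ∩ S.sup id :=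
    eq_of_subset_of_card_le (inter_subset_inter_left (le_sup (f := id) hf)) (by omega)
  have hcount := card_union_add_card_inter (e.powersetCard 2) (pairShadow S)
  rw [← pairShadow_insert, inter_comm,
    pairShadow_inter_powersetCard hf (hef_eq ▸ inter_subset_right), card_powersetCard,
    card_powersetCard, he, hcap, Nat.choose_self] at hcount
  have : Nat.choose 3 2 = 3 := rfl
  omega

section Growth

variable {k : ℕ} {𝒯 : Finset (Finset V)}

lemma exists_subfamily_card_sup_of_isPairLinked (hk : 2 ≤ k) (h3 : ∀ e ∈ 𝒯, e.card = 3)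
    (hfreek : ∀ S ⊆ 𝒯, S.card = k → k + 2 < (S.sup id).card)
    (hfreeℓ : ∀ ℓ, 2 ≤ ℓ → ℓ ≤ k - 1 → ∀ S ⊆ 𝒯, S.card = ℓ → ℓ + 1 < (S.sup id).card)
    (hlinked : IsPairLinked 𝒯) {n : ℕ} (hn : 1 ≤ n) (hn𝒯 : n ≤ 𝒯.card) :
    ∃ S ⊆ 𝒯, S.card = n ∧ n < k ∧ (S.sup id).card = n + 2 ∧
      (pairShadow S).card = 2 * n + 1 := by
  induction n, hn using Nat.le_induction with
  | base =>
    obtain ⟨e, he⟩ := card_pos.mp hn𝒯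
    refine ⟨{e}, singleton_subset_iff.2 he, card_singleton e, by omega, ?_, ?_⟩ <;>
      simp [pairShadow, h3 e he]
  | succ n hn ih =>
    obtain ⟨S, hS𝒯, hSn, -, hsup, hshadow⟩ := ih (by omega)
    obtain ⟨e, he, f, hf, hef⟩ :=
      hlinked S hS𝒯 (card_pos.mp (by omega)) (by rintro rfl; omega)
    obtain ⟨he𝒯, heS⟩ := mem_sdiff.mp he
    have hS' : insert e S ⊆ 𝒯 := insert_subset he𝒯 hS𝒯
    have hcard : (insert e S).card = n + 1 := by rw [card_insert_of_notMem heS, hSn]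
    have hsup' : (insert e S).sup id = e ∪ S.sup id := sup_insert
    have hle : (e ∪ S.sup id).card ≤ n + 3 := by
      have := card_union_add_card_inter e (S.sup id)
      have := card_le_card (inter_subset_inter_left (le_sup (f := id) hf) :
        e ∩ f ⊆ e ∩ S.sup id)
      have := h3 e he𝒯
      omega
    have hnk : n + 1 < k := by
      by_contra! hkn
      have := hfreek _ hS' (by omega)
      rw [hsup'] at this
      omega
    have hgt := hfreeℓ (n + 1) (by omega) (by omega) _ hS' hcard
    rw [hsup'] at hgt
    refine ⟨insert e S, hS', hcard, hnk, by rw [hsup']; omega, ?_⟩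
    rw [card_pairShadow_insert (h3 e he𝒯) hf hef (by omega), hshadow]
    ring

theorem card_pairShadow_of_isPairLinked (hk : 2 ≤ k) (h3 : ∀ e ∈ 𝒯, e.card = 3)
    (hfreek : ∀ S ⊆ 𝒯, S.card = k → k + 2 < (S.sup id).card)
    (hfreeℓ : ∀ ℓ, 2 ≤ ℓ → ℓ ≤ k - 1 → ∀ S ⊆ 𝒯, S.card = ℓ → ℓ + 1 < (S.sup id).card)
    (hlinked : IsPairLinked 𝒯) (hne : 𝒯.Nonempty) :
    (pairShadow 𝒯).card = 2 * 𝒯.card + 1 := by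
  obtain ⟨S, hS𝒯, hSn, -, -, hshadow⟩ :=
    exists_subfamily_card_sup_of_isPairLinked hk h3 hfreek hfreeℓ hlinked (card_pos.2 hne) le_rfl
  rwa [eq_of_subset_of_card_le hS𝒯 hSn.ge] at hshadow

end Growth

lemma SimpleGraph.Connected.exists_adj_of_induce {α : Type*} {G : SimpleGraph α} {s t : Set α}
    (hG : (G.induce s).Connected) {a b : α} (ha : a ∈ s ∩ t) (hb : b ∈ s \ t) :
    ∃ x ∈ s ∩ t, ∃ y ∈ s \ t, G.Adj x y := by
  obtain ⟨p⟩ := hG.preconnected ⟨a, ha.1⟩ ⟨b, hb.1⟩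
  obtain ⟨d, -, hd₁, hd₂⟩ := p.exists_boundary_dart (Subtype.val ⁻¹' t) ha.2 hb.2
  exact ⟨d.fst, ⟨d.fst.2, hd₁⟩, d.snd, ⟨d.snd.2, hd₂⟩, d.adj⟩

lemma isPairLinked_map_subtype {F : Finset (Finset V)} {H : SimpleGraph {e // e ∈ F}}
    (hH : ∀ e f, H.Adj e f → 2 ≤ ((e : Finset V) ∩ f).card) {T : Finset {e // e ∈ F}}
    (hT : (H.induce (T : Set {e // e ∈ F})).Connected) :
    IsPairLinked (T.map (Function.Embedding.subtype (· ∈ F))) := by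
  intro S hS ⟨a, haS⟩ hne
  obtain ⟨b, hb, hbS⟩ := exists_of_ssubset (ssubset_of_subset_of_ne hS hne)
  obtain ⟨a, haT, rfl⟩ := mem_map.mp (hS haS)
  obtain ⟨b, hbT, rfl⟩ := mem_map.mp hb
  obtain ⟨x, ⟨-, hxS⟩, y, ⟨hyT, hyS⟩, hxy⟩ :=
    hT.exists_adj_of_induce (t := {x : {e // e ∈ F} | (x : Finset V) ∈ S}) ⟨haT, haS⟩
      ⟨hbT, hbS⟩
  exact ⟨y, mem_sdiff.2 ⟨mem_map_of_mem _ hyT, hyS⟩, x, hxS, inter_comm (x : Finset V) y ▸ hH x y hxy⟩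

end PairShadow

/-- Let `F` be a 3-uniform hypergraph that is `(k+2,k)`-free and
`(ℓ+1,ℓ)`-free for all `ℓ ∈ [2,k-1]`, and let `H` be the graph on the edges of `F`
joining two edges when they share at least 2 vertices. For every connected (induced)
subgraph `T` of `H`, the 2-shadow of `V(T)` in `F` has exactly `2|T| + 1` elements. -/
theorem connected_cluster_shadow_card {V : Type*} [Fintype V] [DecidableEq V]
    (k : ℕ) (hk : 2 ≤ k) (F : Finset (Finset V)) (h3 : ∀ e ∈ F, e.card = 3)
    (hfreek : ∀ T ⊆ F, T.card = k → k + 2 < (T.sup id).card)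
    (hfreeℓ : ∀ ℓ, 2 ≤ ℓ → ℓ ≤ k - 1 → ∀ T ⊆ F, T.card = ℓ → ℓ + 1 < (T.sup id).card)
    (H : SimpleGraph {e // e ∈ F})
    (hH : ∀ e f : {e // e ∈ F}, H.Adj e f ↔ e ≠ f ∧ 2 ≤ ((e : Finset V) ∩ (f : Finset V)).card)
    (T : Finset {e // e ∈ F})
    (hTconn : (H.induce (↑T : Set {e // e ∈ F})).Connected) :
    (((Finset.univ : Finset V).powersetCard 2).filter
      (fun P => ∃ e ∈ T, P ⊆ (e : Finset V))).card = 2 * T.card + 1 := by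
  set 𝒯 := T.map (Function.Embedding.subtype (· ∈ F))
  have h𝒯F : 𝒯 ⊆ F := fun _ he ↦ map_subtype_subset (t := (F : Set (Finset V))) T he
  have hshadow : ((Finset.univ : Finset V).powersetCard 2).filter
      (fun P => ∃ e ∈ T, P ⊆ (e : Finset V)) = pairShadow 𝒯 := by
    ext P
    simp [pairShadow, 𝒯]
    grind
  obtain ⟨⟨r, hr⟩⟩ := hTconn.nonempty
  rw [hshadow, ← card_map (Function.Embedding.subtype (· ∈ F))]
  exact card_pairShadow_of_isPairLinked hk (fun e he ↦ h3 e (h𝒯F he))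
    (fun S hS ↦ hfreek S (hS.trans h𝒯F)) (fun ℓ h2 hℓ S hS ↦ hfreeℓ ℓ h2 hℓ S (hS.trans h𝒯F))
    (isPairLinked_map_subtype (fun e f h ↦ ((hH e f).mp h).2) hTconn) ⟨r, mem_map_of_mem _ hr⟩
end
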